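/- arXiv:2405.20754 — 3 statements merged into one kernel-verified Lean document; each statement's English description precedes it below -/
import Mathlib

section
/- Define the intermittent jet W_k(t,x) = −φ_{(k₁)}(t,x) ψ'_{(k)}(x) k₁ where φ_{(k₁)}(t,x) = φ_{r_∥}(λ r_⊥ N_Λ (k₁·x + μt)) and ψ_{(k)}(x) = ψ_{r_⊥}(λ r_⊥ N_Λ k·x), with (k,k₁) an orthonormal basis of ℝ². Then ∂_t |W_k|² k₁ = μ div(W_k ⊗ W_k). -/
open RealInnerProductSpace

/-- The 2D intermittent jet
`W_k(t,x) = −φ_{r_∥}(λ r_⊥ N_Λ (k₁·x + μt)) ψ'_{r_⊥}(λ r_⊥ N_Λ k·x) k₁`,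
built from 1D rescaled profiles `φ_{r_∥}(y) = r_∥^{−1/2} φ(y/r_∥)`,
`ψ_{r_⊥}(y) = r_⊥^{−1/2} ψ(y/r_⊥)`. -/
noncomputable def jetW (φ ψ : ℝ → ℝ) (rpar rperp lam μ NΛ : ℝ)
    (k k₁ : EuclideanSpace ℝ (Fin 2)) (t : ℝ) (x : EuclideanSpace ℝ (Fin 2)) :
    EuclideanSpace ℝ (Fin 2) :=
  -((rpar ^ (-(1:ℝ)/2) * φ ((lam * rperp * NΛ * (⟪k₁, x⟫ + μ * t)) / rpar)) *
      deriv (fun s => rperp ^ (-(1:ℝ)/2) * ψ (s / rperp))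
        (lam * rperp * NΛ * ⟪k, x⟫)) • k₁

/-- Identity (3.8): `∂_t |W_k|² k₁ = μ div(W_k ⊗ W_k)`. -/
theorem stmt_8 (φ ψ : ℝ → ℝ) (hφ : ContDiff ℝ (⊤ : ℕ∞) φ) (hψ : ContDiff ℝ (⊤ : ℕ∞) ψ)
    (rpar rperp lam μ NΛ : ℝ) (hrpar : 0 < rpar) (hrperp : 0 < rperp)
    (hlam : 0 < lam) (hμ : 0 < μ) (hN : 0 < NΛ)
    (k k₁ : EuclideanSpace ℝ (Fin 2)) (hk : ‖k‖ = 1) (hk₁ : ‖k₁‖ = 1)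
    (horth : ⟪k, k₁⟫ = 0) :
    ∀ (t : ℝ) (x : EuclideanSpace ℝ (Fin 2)) (i : Fin 2),
      deriv (fun s => ‖jetW φ ψ rpar rperp lam μ NΛ k k₁ s x‖^2) t * k₁ i
        = μ * ∑ j : Fin 2,
            fderiv ℝ (fun y => jetW φ ψ rpar rperp lam μ NΛ k k₁ t y i *
              jetW φ ψ rpar rperp lam μ NΛ k k₁ t y j) x (EuclideanSpace.single j 1) := by
  intro t x i
  set c : ℝ := lam * rperp * NΛ with hc
  set P : ℝ → ℝ := fun u => rpar ^ (-(1:ℝ)/2) * φ (u / rpar) with hPdef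
  set Q : ℝ → ℝ := deriv (fun s => rperp ^ (-(1:ℝ)/2) * ψ (s / rperp)) with hQdef
  have hP : Differentiable ℝ P := by
    exact (hφ.differentiable (by simp) |>.comp (differentiable_id.div_const rpar)).const_mul _
  have hQ : Differentiable ℝ Q := by
    have hsm : ContDiff ℝ (↑(⊤:ℕ∞)) (fun s => rperp ^ (-(1:ℝ)/2) * ψ (s / rperp)) :=
      (contDiff_const.mul (hψ.comp (contDiff_id.div_const rperp))).of_le (by simp)
    exact ((contDiff_infty_iff_deriv.mp hsm).2).differentiable (by simp)
  -- basis sums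
  have hk1s : (∑ j : Fin 2, k₁ j * k₁ j) = 1 := by
    have h1 : (⟪k₁, k₁⟫ : ℝ) = 1 := by
      rw [real_inner_self_eq_norm_sq, hk₁]; norm_num
    rw [← h1, PiLp.inner_apply]
    exact Finset.sum_congr rfl fun j _ => by simp [RCLike.inner_apply, conj_trivial, mul_comm, sq]
  have hk01 : (∑ j : Fin 2, k j * k₁ j) = 0 := by
    rw [← horth, PiLp.inner_apply]
    exact Finset.sum_congr rfl fun j _ => by simp [RCLike.inner_apply, conj_trivial, mul_comm]
  set a : ℝ := ⟪k₁, x⟫ with ha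
  set b : ℝ := ⟪k, x⟫ with hb
  set u₀ : ℝ := c * (a + μ * t) with hu0
  set dP : ℝ := deriv P u₀ with hdP
  set dQ : ℝ := deriv Q (c * b) with hdQ
  -- LHS
  have hLfun : (fun s => ‖jetW φ ψ rpar rperp lam μ NΛ k k₁ s x‖^2)
      = fun s => (P (c * (a + μ * s)) * Q (c * b))^2 := by
    funext s
    simp only [jetW, norm_smul, norm_neg, Real.norm_eq_abs, hk₁, mul_one, sq_abs]
    rfl
  have hLd : HasDerivAt (fun s => (P (c * (a + μ * s)) * Q (c * b))^2)
      (2 * (P u₀ * Q (c * b)) ^ 1 * (dP * (c * (μ * 1)) * Q (c * b))) t := by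
    have h1 : HasDerivAt (fun s : ℝ => c * (a + μ * s)) (c * (μ * 1)) t :=
      (((hasDerivAt_id t).const_mul μ).const_add a).const_mul c
    have h2 : HasDerivAt (fun s => P (c * (a + μ * s))) (dP * (c * (μ * 1))) t :=
      (hP.differentiableAt.hasDerivAt).comp t h1
    exact (h2.mul_const (Q (c * b))).pow 2
  have hLHS : deriv (fun s => ‖jetW φ ψ rpar rperp lam μ NΛ k k₁ s x‖^2) t
      = 2 * (P u₀ * Q (c * b)) * (dP * (c * μ) * Q (c * b)) := by
    rw [hLfun, hLd.deriv]; ring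
  -- RHS per-coordinate fderiv
  have hR : ∀ j : Fin 2,
      fderiv ℝ (fun y => jetW φ ψ rpar rperp lam μ NΛ k k₁ t y i *
        jetW φ ψ rpar rperp lam μ NΛ k k₁ t y j) x (EuclideanSpace.single j 1)
      = (k₁ i * k₁ j) * (2 * (P u₀ * Q (c * b)) *
          (Q (c * b) * (dP * (c * k₁ j)) + P u₀ * (dQ * (c * k j)))) := by
    intro j
    have hfun : (fun y => jetW φ ψ rpar rperp lam μ NΛ k k₁ t y i *
        jetW φ ψ rpar rperp lam μ NΛ k k₁ t y j)
        = fun y => (P (c * (⟪k₁, y⟫ + μ * t)) * Q (c * ⟪k, y⟫))^2 * (k₁ i * k₁ j) := by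
      funext y
      simp only [jetW, PiLp.smul_apply, PiLp.neg_apply, smul_eq_mul]
      ring
    have hinner1 : HasFDerivAt (fun z : EuclideanSpace ℝ (Fin 2) => (⟪k₁, z⟫ : ℝ))
        (innerSL ℝ k₁) x := (innerSL ℝ k₁).hasFDerivAt
    have hinner2 : HasFDerivAt (fun z : EuclideanSpace ℝ (Fin 2) => (⟪k, z⟫ : ℝ))
        (innerSL ℝ k) x := (innerSL ℝ k).hasFDerivAt
    have hu : HasFDerivAt (fun z : EuclideanSpace ℝ (Fin 2) => c * (⟪k₁, z⟫ + μ * t))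
        (c • (innerSL ℝ k₁)) x := by
      simpa using (hinner1.add_const (μ * t)).const_mul c
    have hv : HasFDerivAt (fun z : EuclideanSpace ℝ (Fin 2) => c * ⟪k, z⟫)
        (c • (innerSL ℝ k)) x := hinner2.const_mul c
    have hA : HasFDerivAt (fun y : EuclideanSpace ℝ (Fin 2) => P (c * (⟪k₁, y⟫ + μ * t)))
        (dP • (c • innerSL ℝ k₁)) x :=
      (hP.differentiableAt.hasDerivAt).comp_hasFDerivAt x hu
    have hB : HasFDerivAt (fun y : EuclideanSpace ℝ (Fin 2) => Q (c * ⟪k, y⟫))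
        (dQ • (c • innerSL ℝ k)) x :=
      (hQ.differentiableAt.hasDerivAt).comp_hasFDerivAt x hv
    have hh : HasFDerivAt
        (fun y : EuclideanSpace ℝ (Fin 2) => P (c * (⟪k₁, y⟫ + μ * t)) * Q (c * ⟪k, y⟫))
        (P u₀ • (dQ • (c • innerSL ℝ k)) + Q (c * b) • (dP • (c • innerSL ℝ k₁))) x :=
      hA.mul hB
    have hsq := (hh.mul hh).mul_const (k₁ i * k₁ j)
    rw [hfun]
    have := hsq.fderiv
    rw [show (fun y : EuclideanSpace ℝ (Fin 2) =>
        (P (c * (⟪k₁, y⟫ + μ * t)) * Q (c * ⟪k, y⟫))^2 * (k₁ i * k₁ j))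
        = fun y => (P (c * (⟪k₁, y⟫ + μ * t)) * Q (c * ⟪k, y⟫)) *
          (P (c * (⟪k₁, y⟫ + μ * t)) * Q (c * ⟪k, y⟫)) * (k₁ i * k₁ j) by
      funext y; ring]
    simp only [Pi.mul_apply] at this
    rw [this]
    simp only [ContinuousLinearMap.add_apply, ContinuousLinearMap.smul_apply, innerSL_apply_apply,
      smul_eq_mul, EuclideanSpace.inner_single_right, conj_trivial, mul_one]
    ring
  -- combine
  rw [hLHS]
  have hsum : (∑ j : Fin 2,
      fderiv ℝ (fun y => jetW φ ψ rpar rperp lam μ NΛ k k₁ t y i *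
        jetW φ ψ rpar rperp lam μ NΛ k k₁ t y j) x (EuclideanSpace.single j 1))
      = (∑ j : Fin 2, k₁ j * k₁ j) * (k₁ i * (2 * (P u₀ * Q (c * b)) * (Q (c * b) * dP * c)))
        + (∑ j : Fin 2, k j * k₁ j) * (k₁ i * (2 * (P u₀ * Q (c * b)) * (P u₀ * dQ * c))) := by
    rw [Finset.sum_mul, Finset.sum_mul, ← Finset.sum_add_distrib]
    refine Finset.sum_congr rfl fun j _ => ?_
    rw [hR j]; ring
  rw [hsum, hk1s, hk01]; ring
end

section
/- There exists a finite set Λ ⊂ 𝕊¹ ∩ ℚ² and a constant C_R > 0, together with positive smooth functions γ_{(k)}: B_{C_R}(Id) → ℝ for k ∈ Λ, such that every symmetric 2×2 matrix R with |R − Id| < C_R can be written as R = Σ_{k∈Λ} γ_{(k)}(R)² k₁ ⊗ k₁, where k₁ is the rotation of k by π/2. -/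
noncomputable section

def vA : EuclideanSpace ℝ (Fin 2) := (WithLp.equiv 2 _).symm ![1, 0]
def vB : EuclideanSpace ℝ (Fin 2) := (WithLp.equiv 2 _).symm ![0, 1]
def vC : EuclideanSpace ℝ (Fin 2) := (WithLp.equiv 2 _).symm ![3/5, 4/5]
def vD : EuclideanSpace ℝ (Fin 2) := (WithLp.equiv 2 _).symm ![3/5, -(4/5)]

lemma vA0 : vA 0 = 1 := by simp [vA]
lemma vA1 : vA 1 = 0 := by simp [vA]
lemma vB0 : vB 0 = 0 := by simp [vB]
lemma vB1 : vB 1 = 1 := by simp [vB]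
lemma vC0 : vC 0 = 3/5 := by simp [vC]
lemma vC1 : vC 1 = 4/5 := by simp [vC]
lemma vD0 : vD 0 = 3/5 := by simp [vD]
lemma vD1 : vD 1 = -(4/5) := by simp [vD]

lemma nA : ‖vA‖ = 1 := by
  rw [EuclideanSpace.norm_eq, Fin.sum_univ_two, vA0, vA1]
  norm_num
lemma nC : ‖vC‖ = 1 := by
  rw [EuclideanSpace.norm_eq, Fin.sum_univ_two, vC0, vC1]
  rw [show ‖(3:ℝ)/5‖ ^ 2 + ‖(4:ℝ)/5‖ ^ 2 = 1 by simp [Real.norm_eq_abs, abs_of_pos]; norm_num]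
  exact Real.sqrt_one

lemma nB : ‖vB‖ = 1 := by
  rw [EuclideanSpace.norm_eq, Fin.sum_univ_two, vB0, vB1]; norm_num
lemma nD : ‖vD‖ = 1 := by
  rw [EuclideanSpace.norm_eq, Fin.sum_univ_two, vD0, vD1]
  rw [show ‖(3:ℝ)/5‖ ^ 2 + ‖-((4:ℝ)/5)‖ ^ 2 = 1 by
    simp [Real.norm_eq_abs, abs_of_pos]; norm_num]
  exact Real.sqrt_one

open Classical in
def gam : EuclideanSpace ℝ (Fin 2) → (Fin 2 → Fin 2 → ℝ) → ℝ :=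
  fun k R => Real.sqrt (
    if k 0 = 1 then R 1 1 - 9/50
    else if k 0 = 0 then R 0 0 - 8/25
    else if k 1 = 4/5 then 1/4 - (25/24) * R 0 1
    else 1/4 + (25/24) * R 0 1)

lemma gamA (R : Fin 2 → Fin 2 → ℝ) : gam vA R = Real.sqrt (R 1 1 - 9/50) := by
  simp [gam, vA0]
lemma gamB (R : Fin 2 → Fin 2 → ℝ) : gam vB R = Real.sqrt (R 0 0 - 8/25) := by
  simp [gam, vB0]
lemma gamC (R : Fin 2 → Fin 2 → ℝ) : gam vC R = Real.sqrt (1/4 - (25/24) * R 0 1) := by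
  simp [gam, vC0, vC1]; norm_num
lemma gamD (R : Fin 2 → Fin 2 → ℝ) : gam vD R = Real.sqrt (1/4 + (25/24) * R 0 1) := by
  simp [gam, vD0, vD1]; norm_num

lemma sqrt_contDiffOn {f : (Fin 2 → Fin 2 → ℝ) → ℝ} (hf : ContDiff ℝ (⊤ : ℕ∞) f)
    {s : Set (Fin 2 → Fin 2 → ℝ)} (hpos : ∀ R ∈ s, 0 < f R) :
    ContDiffOn ℝ (⊤ : ℕ∞) (fun R => Real.sqrt (f R)) s := fun R hR =>
  ((Real.contDiffAt_sqrt (ne_of_gt (hpos R hR))).comp R hf.contDiffAt).contDiffWithinAt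

lemma entry_bound {R : Fin 2 → Fin 2 → ℝ}
    (h : dist R (fun i j => if i = j then (1:ℝ) else 0) < 1/10) (i j : Fin 2) :
    |R i j - if i = j then 1 else 0| < 1/10 := by
  have h1 := (dist_pi_lt_iff (by norm_num)).1 h i
  have h2 := (dist_pi_lt_iff (by norm_num)).1 h1 j
  rwa [Real.dist_eq] at h2

lemma pos_of_ball {R : Fin 2 → Fin 2 → ℝ}
    (h : dist R (fun i j => if i = j then (1:ℝ) else 0) < 1/10) :
    0 < R 1 1 - 9/50 ∧ 0 < R 0 0 - 8/25 ∧
      0 < 1/4 - (25/24) * R 0 1 ∧ 0 < 1/4 + (25/24) * R 0 1 := by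
  have h00 := entry_bound h 0 0
  have h01 := entry_bound h 0 1
  have h11 := entry_bound h 1 1
  rw [abs_lt] at h00 h01 h11
  norm_num at h00 h01 h11
  refine ⟨by linarith [h11.1], by linarith [h00.1], by linarith [h01.1, h01.2], by linarith [h01.1, h01.2]⟩

lemma dAB : vA ≠ vB := fun h => by have : vA 0 = vB 0 := (by rw [h]); rw [vA0, vB0] at this; norm_num at this
lemma dAC : vA ≠ vC := fun h => by have : vA 0 = vC 0 := (by rw [h]); rw [vA0, vC0] at this; norm_num at this
lemma dAD : vA ≠ vD := fun h => by have : vA 0 = vD 0 := (by rw [h]); rw [vA0, vD0] at this; norm_num at this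
lemma dBC : vB ≠ vC := fun h => by have : vB 0 = vC 0 := (by rw [h]); rw [vB0, vC0] at this; norm_num at this
lemma dBD : vB ≠ vD := fun h => by have : vB 0 = vD 0 := (by rw [h]); rw [vB0, vD0] at this; norm_num at this
lemma dCD : vC ≠ vD := fun h => by have : vC 1 = vD 1 := (by rw [h]); rw [vC1, vD1] at this; norm_num at this


/-- Geometric Lemma 6.1 (Cheskidov–Luo): there is a finite set
`Λ ⊂ 𝕊¹ ∩ ℚ²`, a radius `C_R > 0` and positive smooth functions `γ_{(k)}` on the
ball `B_{C_R}(Id)` of symmetric `2×2` matrices such that every symmetric `R` with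
`|R − Id| < C_R` decomposes as `R = Σ_{k∈Λ} γ_{(k)}(R)² k₁ ⊗ k₁`, where `k₁` is the
rotation of `k` by `π/2`. -/
theorem stmt_13 :
    ∃ (Λ : Finset (EuclideanSpace ℝ (Fin 2))) (CR : ℝ)
      (γfun : EuclideanSpace ℝ (Fin 2) → (Fin 2 → Fin 2 → ℝ) → ℝ),
      0 < CR ∧
      (∀ k ∈ Λ, ‖k‖ = 1 ∧ ∀ i, ∃ q : ℚ, k i = (q : ℝ)) ∧
      (∀ k ∈ Λ, ContDiffOn ℝ (⊤ : ℕ∞) (γfun k)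
        (Metric.ball (fun i j => if i = j then (1:ℝ) else 0) CR)) ∧
      (∀ k ∈ Λ, ∀ R ∈ Metric.ball (fun i j => if i = j then (1:ℝ) else 0) CR,
        0 < γfun k R) ∧
      (∀ R : Fin 2 → Fin 2 → ℝ, (∀ i j, R i j = R j i) →
        dist R (fun i j => if i = j then (1:ℝ) else 0) < CR →
        ∀ i j, R i j = ∑ k ∈ Λ,
          (γfun k R)^2 * ((![-(k 1), k 0]) i * (![-(k 1), k 0]) j)) := by
  classical
  refine ⟨{vA, vB, vC, vD}, 1/10, gam, by norm_num, ?_, ?_, ?_, ?_⟩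
  · intro k hk
    simp only [Finset.mem_insert, Finset.mem_singleton] at hk
    rcases hk with rfl | rfl | rfl | rfl
    · exact ⟨nA, fun i => by fin_cases i <;> [exact ⟨1, by push_cast; exact vA0⟩; exact ⟨0, by push_cast; exact vA1⟩]⟩
    · exact ⟨nB, fun i => by fin_cases i <;> [exact ⟨0, by push_cast; exact vB0⟩; exact ⟨1, by push_cast; exact vB1⟩]⟩
    · exact ⟨nC, fun i => by fin_cases i <;> [exact ⟨3/5, by push_cast; exact vC0⟩; exact ⟨4/5, by push_cast; exact vC1⟩]⟩
    · exact ⟨nD, fun i => by fin_cases i <;> [exact ⟨3/5, by push_cast; exact vD0⟩; exact ⟨-(4/5), by push_cast; exact vD1⟩]⟩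
  · intro k hk
    simp only [Finset.mem_insert, Finset.mem_singleton] at hk
    rcases hk with rfl | rfl | rfl | rfl
    · exact (funext gamA : gam vA = _) ▸ sqrt_contDiffOn
        ((contDiff_apply_apply ℝ ℝ 1 1).sub contDiff_const)
        (fun R hR => (pos_of_ball (Metric.mem_ball.1 hR)).1)
    · exact (funext gamB : gam vB = _) ▸ sqrt_contDiffOn
        ((contDiff_apply_apply ℝ ℝ 0 0).sub contDiff_const)
        (fun R hR => (pos_of_ball (Metric.mem_ball.1 hR)).2.1)
    · exact (funext gamC : gam vC = _) ▸ sqrt_contDiffOn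
        (contDiff_const.sub (contDiff_const.mul (contDiff_apply_apply ℝ ℝ 0 1)))
        (fun R hR => (pos_of_ball (Metric.mem_ball.1 hR)).2.2.1)
    · exact (funext gamD : gam vD = _) ▸ sqrt_contDiffOn
        (contDiff_const.add (contDiff_const.mul (contDiff_apply_apply ℝ ℝ 0 1)))
        (fun R hR => (pos_of_ball (Metric.mem_ball.1 hR)).2.2.2)
  · intro k hk R hR
    have hp := pos_of_ball (Metric.mem_ball.1 hR)
    simp only [Finset.mem_insert, Finset.mem_singleton] at hk
    rcases hk with rfl | rfl | rfl | rfl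
    · rw [gamA]; exact Real.sqrt_pos.2 hp.1
    · rw [gamB]; exact Real.sqrt_pos.2 hp.2.1
    · rw [gamC]; exact Real.sqrt_pos.2 hp.2.2.1
    · rw [gamD]; exact Real.sqrt_pos.2 hp.2.2.2
  · intro R hsym hR i j
    have hp := pos_of_ball hR
    rw [Finset.sum_insert (by simp [dAB, dAC, dAD]),
        Finset.sum_insert (by simp [dBC, dBD]),
        Finset.sum_insert (by simp [dCD]), Finset.sum_singleton]
    rw [gamA, gamB, gamC, gamD,
        Real.sq_sqrt hp.1.le, Real.sq_sqrt hp.2.1.le,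
        Real.sq_sqrt hp.2.2.1.le, Real.sq_sqrt hp.2.2.2.le]
    have h10 := hsym 1 0
    fin_cases i <;> fin_cases j <;>
      simp [vA0, vA1, vB0, vB1, vC0, vC1, vD0, vD1] <;> ring_nf <;> linarith [hsym 0 1]
end
end

section
/- For d ≥ 1, p ∈ [1,∞), σ ∈ ℕ with σ ≥ 1, and smooth functions f, g: 𝕋^d → ℝ, one has | ‖f · g(σ·)‖_{L^p(𝕋^d)} − ‖f‖_{L^p(𝕋^d)} ‖g‖_{L^p(𝕋^d)} | ≤ C(p,d) σ^{−1/p} ‖f‖_{C¹(𝕋^d)} ‖g‖_{L^p(𝕋^d)}. -/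
open MeasureTheory

lemma real_rpow_add_le {q a b : ℝ} (hq0 : 0 ≤ q) (hq1 : q ≤ 1) (ha : 0 ≤ a) (hb : 0 ≤ b) :
    (a + b) ^ q ≤ a ^ q + b ^ q := by
  have h := NNReal.rpow_add_le_add_rpow a.toNNReal b.toNNReal hq0 hq1
  have h2 := NNReal.coe_le_coe.2 h
  push_cast at h2
  rwa [Real.coe_toNNReal a ha, Real.coe_toNNReal b hb] at h2

lemma abs_rpow_sub_rpow_le {q x y : ℝ} (hq0 : 0 < q) (hq1 : q ≤ 1) (hx : 0 ≤ x) (hy : 0 ≤ y) :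
    |x ^ q - y ^ q| ≤ |x - y| ^ q := by
  wlog hxy : y ≤ x generalizing x y
  · rw [abs_sub_comm, abs_sub_comm x y]; exact this hy hx (le_of_not_ge hxy)
  have h1 : x ^ q ≤ (x - y) ^ q + y ^ q := by
    have := real_rpow_add_le hq0.le hq1 (sub_nonneg.2 hxy) hy
    rwa [sub_add_cancel] at this
  have h0 : 0 ≤ x ^ q - y ^ q := sub_nonneg.2 (Real.rpow_le_rpow hy hxy hq0.le)
  rw [abs_of_nonneg h0, abs_of_nonneg (sub_nonneg.2 hxy)]
  linarith

lemma rpow_lipschitz {p M a b : ℝ} (hp : 1 ≤ p) (ha : 0 ≤ a) (hb : 0 ≤ b)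
    (haM : a ≤ M) (hbM : b ≤ M) :
    |a ^ p - b ^ p| ≤ p * M ^ (p - 1) * |a - b| := by
  wlog hab : b ≤ a generalizing a b
  · rw [abs_sub_comm, abs_sub_comm a b]; exact this hb ha hbM haM (le_of_not_ge hab)
  have hp0 : (0:ℝ) < p := lt_of_lt_of_le one_pos hp
  have hM : 0 ≤ M := ha.trans haM
  have hFTC : ∫ t in b..a, t ^ (p - 1) = (a ^ p - b ^ p) / p := by
    rw [integral_rpow (Or.inl (by linarith : (-1:ℝ) < p - 1))]
    rw [sub_add_cancel]
  have h3 : (∫ t in b..a, t ^ (p - 1)) ≤ M ^ (p - 1) * (a - b) := by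
    have := intervalIntegral.integral_mono_on hab
      (intervalIntegral.intervalIntegrable_rpow (μ := volume) (by left; linarith))
      (intervalIntegrable_const (c := M ^ (p - 1)))
      (fun t ht => Real.rpow_le_rpow (hb.trans ht.1) (ht.2.trans haM) (by linarith))
    rw [intervalIntegral.integral_const, smul_eq_mul] at this
    linarith [this]
  have h2 : a ^ p - b ^ p = (∫ t in b..a, t ^ (p - 1)) * p := by
    rw [hFTC]; field_simp
  have h0 : 0 ≤ a ^ p - b ^ p := sub_nonneg.2 (Real.rpow_le_rpow hb hab hp0.le)
  rw [abs_of_nonneg h0, abs_of_nonneg (sub_nonneg.2 hab)]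
  calc a ^ p - b ^ p = (∫ t in b..a, t ^ (p - 1)) * p := h2
    _ ≤ M ^ (p - 1) * (a - b) * p := mul_le_mul_of_nonneg_right h3 hp0.le
    _ = p * M ^ (p - 1) * (a - b) := by ring

/-- `L^p` norm over one periodic cell (the unit cube) of `𝕋^d`. -/
noncomputable def cubeNormLp (d : ℕ) (p : ℝ) (f : (Fin d → ℝ) → ℝ) : ℝ :=
  (∫ x in Set.Icc (0 : Fin d → ℝ) 1, |f x| ^ p) ^ (1/p)

/-- `C¹` norm over one periodic cell of `𝕋^d`. -/
noncomputable def cubeNormC1 (d : ℕ) (f : (Fin d → ℝ) → ℝ) : ℝ :=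
  (⨆ x ∈ Set.Icc (0 : Fin d → ℝ) 1, |f x|)
    + ⨆ x ∈ Set.Icc (0 : Fin d → ℝ) 1, ‖fderiv ℝ f x‖

namespace Stmt14


variable {d : ℕ}

/-- The half-open unit cube. -/
def IcoC (d : ℕ) : Set (Fin d → ℝ) := Set.univ.pi fun _ : Fin d => Set.Ico (0:ℝ) 1

/-- Subcube of side `1/σ` indexed by `k`. -/
def cube (σ : ℕ) (k : Fin d → Fin σ) : Set (Fin d → ℝ) :=
  Set.univ.pi fun i => Set.Ico ((k i : ℝ) / σ) (((k i : ℝ) + 1) / σ)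

/-- Affine map sending the unit cube to `cube σ k`. -/
noncomputable def Tmap (σ : ℕ) (k : Fin d → Fin σ) (z : Fin d → ℝ) : Fin d → ℝ :=
  ((σ:ℝ))⁻¹ • (z + fun i => (k i : ℝ))

lemma measurableSet_IcoC : MeasurableSet (IcoC d) :=
  MeasurableSet.univ_pi fun _ => measurableSet_Ico

lemma measurableSet_cube (σ : ℕ) (k : Fin d → Fin σ) : MeasurableSet (cube σ k) :=
  MeasurableSet.univ_pi fun _ => measurableSet_Ico

lemma icoC_subset : IcoC d ⊆ Set.Icc (0 : Fin d → ℝ) 1 := by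
  rw [← Set.pi_univ_Icc]
  exact Set.pi_mono fun i _ => Set.Ico_subset_Icc_self

lemma cellMem {σ : ℕ} (hσ : 1 ≤ σ) (k : Fin d → Fin σ) (z : Fin d → ℝ) :
    z ∈ IcoC d ↔ Tmap σ k z ∈ cube σ k := by
  have hσ0 : (0:ℝ) < σ := by exact_mod_cast hσ
  simp only [IcoC, cube, Tmap, Set.mem_pi, Set.mem_univ, forall_true_left, Set.mem_Ico,
    Pi.smul_apply, Pi.add_apply, smul_eq_mul]
  refine forall_congr' fun i => ?_
  rw [inv_mul_eq_div, div_le_div_iff_of_pos_right hσ0, div_lt_div_iff_of_pos_right hσ0]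
  constructor
  · rintro ⟨h1, h2⟩; constructor <;> linarith
  · rintro ⟨h1, h2⟩; constructor <;> linarith

lemma Tmap_mem_Icc {σ : ℕ} (hσ : 1 ≤ σ) (k : Fin d → Fin σ) {z : Fin d → ℝ}
    (hz : z ∈ Set.Icc (0 : Fin d → ℝ) 1) : Tmap σ k z ∈ Set.Icc (0 : Fin d → ℝ) 1 := by
  have hσ0 : (0:ℝ) < σ := by exact_mod_cast hσ
  rw [← Set.pi_univ_Icc] at hz ⊢
  intro i _
  have hzi := hz i (Set.mem_univ i)
  simp only [Set.mem_Icc, Pi.zero_apply, Pi.one_apply] at hzi ⊢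
  have hki : (k i : ℝ) + 1 ≤ σ := by exact_mod_cast (k i).isLt
  have hk0 : (0:ℝ) ≤ (k i : ℝ) := Nat.cast_nonneg _
  simp only [Tmap, Pi.smul_apply, Pi.add_apply, smul_eq_mul, inv_mul_eq_div]
  constructor
  · exact div_nonneg (by linarith [hzi.1]) hσ0.le
  · rw [div_le_one hσ0]; linarith [hzi.2]

lemma comp_integral {σ : ℕ} (hσ : 1 ≤ σ) (Φ : (Fin d → ℝ) → ℝ) (k : Fin d → Fin σ) :
    ∫ z in IcoC d, Φ (Tmap σ k z) = (σ:ℝ)^d * ∫ x in cube σ k, Φ x := by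
  rw [← MeasureTheory.integral_indicator measurableSet_IcoC]
  have hpt : ∀ z, (IcoC d).indicator (fun z => Φ (Tmap σ k z)) z
      = (cube σ k).indicator Φ (Tmap σ k z) := by
    intro z
    by_cases h : z ∈ IcoC d
    · rw [Set.indicator_of_mem h, Set.indicator_of_mem ((cellMem hσ k z).1 h)]
    · rw [Set.indicator_of_notMem h,
        Set.indicator_of_notMem (fun hc => h ((cellMem hσ k z).2 hc))]
  simp_rw [hpt]
  have : ∀ z, (cube σ k).indicator Φ (Tmap σ k z)
      = (fun y => (cube σ k).indicator Φ ((σ:ℝ)⁻¹ • y)) (z + fun i => ((k i : ℕ) : ℝ)) :=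
    fun z => rfl
  simp_rw [this]
  rw [MeasureTheory.integral_add_right_eq_self
    (fun y => (cube σ k).indicator Φ ((σ:ℝ)⁻¹ • y)) _]
  rw [MeasureTheory.Measure.integral_comp_inv_smul_of_nonneg volume
    ((cube σ k).indicator Φ) (Nat.cast_nonneg σ)]
  rw [MeasureTheory.integral_indicator (measurableSet_cube σ k)]
  have hfr : Module.finrank ℝ (Fin d → ℝ) = d := by simp
  rw [hfr, smul_eq_mul]

lemma union_cubes {σ : ℕ} (hσ : 1 ≤ σ) : (⋃ k : Fin d → Fin σ, cube σ k) = IcoC d := by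
  have hσ0 : (0:ℝ) < σ := by exact_mod_cast hσ
  unfold cube IcoC
  rw [Set.iUnion_univ_pi (fun (i : Fin d) (j : Fin σ) => Set.Ico ((j:ℝ)/(σ:ℝ)) (((j:ℝ)+1)/(σ:ℝ)))]
  refine congrArg (Set.univ.pi) (funext fun i => ?_)
  ext t
  simp only [Set.mem_iUnion, Set.mem_Ico]
  constructor
  · rintro ⟨j, h1, h2⟩
    have hj0 : (0:ℝ) ≤ (j:ℝ) / σ := by positivity
    have hj1 : ((j:ℝ) + 1) ≤ σ := by exact_mod_cast j.isLt
    refine ⟨le_trans hj0 h1, lt_of_lt_of_le h2 ?_⟩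
    rw [div_le_one hσ0]; exact hj1
  · rintro ⟨h0, h1⟩
    have hst : (σ:ℝ) * t < σ := by nlinarith
    have hfl : Nat.floor ((σ:ℝ) * t) < σ :=
      (Nat.floor_lt (by positivity)).2 hst
    refine ⟨⟨Nat.floor ((σ:ℝ) * t), hfl⟩, ?_, ?_⟩
    · rw [div_le_iff₀ hσ0]
      calc ((Nat.floor ((σ:ℝ) * t) : ℝ)) ≤ (σ:ℝ) * t := Nat.floor_le (by positivity)
        _ = t * σ := mul_comm _ _
    · rw [lt_div_iff₀ hσ0]
      calc t * σ = (σ:ℝ) * t := mul_comm _ _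
        _ < Nat.floor ((σ:ℝ) * t) + 1 := Nat.lt_floor_add_one _

lemma cubes_disjoint (σ : ℕ) : Pairwise (Function.onFun Disjoint (cube (d := d) σ)) := by
  intro k k' hne
  rw [Function.onFun, Set.disjoint_left]
  intro x hx hx'
  apply hne
  funext i
  have hσ0 : (0:ℝ) < σ := by exact_mod_cast (k i).pos
  have h1 := hx i (Set.mem_univ i)
  have h2 := hx' i (Set.mem_univ i)
  simp only [Set.mem_Ico] at h1 h2
  have e1 : (k i : ℝ) / σ < ((k' i : ℝ) + 1) / σ := lt_of_le_of_lt h1.1 h2.2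
  have e2 : (k' i : ℝ) / σ < ((k i : ℝ) + 1) / σ := lt_of_le_of_lt h2.1 h1.2
  rw [div_lt_div_iff_of_pos_right hσ0] at e1 e2
  have n1 : (k i : ℕ) < (k' i : ℕ) + 1 := by exact_mod_cast e1
  have n2 : (k' i : ℕ) < (k i : ℕ) + 1 := by exact_mod_cast e2
  exact Fin.ext (le_antisymm (Nat.lt_succ_iff.1 n1) (Nat.lt_succ_iff.1 n2))

lemma icoC_ae_eq : IcoC d =ᵐ[(volume : Measure (Fin d → ℝ))] Set.Icc (0 : Fin d → ℝ) 1 := by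
  have h1 : volume (Set.Icc (0 : Fin d → ℝ) 1) = 1 := by
    rw [← Set.pi_univ_Icc, volume_pi_pi]
    simp [Real.volume_Icc]
  have h2 : volume (IcoC d) = 1 := by
    rw [IcoC, volume_pi_pi]
    simp [Real.volume_Ico]
  refine MeasureTheory.ae_eq_of_subset_of_measure_ge icoC_subset ?_
    measurableSet_IcoC.nullMeasurableSet ?_
  · rw [h1, h2]
  · rw [h1]; exact ENNReal.one_ne_top

lemma volume_IcoC : (volume (IcoC d)).toReal = 1 := by
  rw [IcoC, volume_pi_pi]; simp [Real.volume_Ico]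

lemma tiling {σ : ℕ} (hσ : 1 ≤ σ) (Φ : (Fin d → ℝ) → ℝ)
    (hΦ : IntegrableOn Φ (Set.Icc (0 : Fin d → ℝ) 1) volume) :
    (σ:ℝ)^d * ∫ x in Set.Icc (0 : Fin d → ℝ) 1, Φ x
      = ∑ k : Fin d → Fin σ, ∫ z in IcoC d, Φ (Tmap σ k z) := by
  have key : ∫ x in Set.Icc (0 : Fin d → ℝ) 1, Φ x
      = ∑ k : Fin d → Fin σ, ∫ x in cube σ k, Φ x := by
    rw [← MeasureTheory.setIntegral_congr_set icoC_ae_eq, ← union_cubes hσ,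
      MeasureTheory.integral_iUnion (fun k => measurableSet_cube σ k) (cubes_disjoint σ)
        (by rw [union_cubes hσ]; exact hΦ.mono_set icoC_subset),
      tsum_fintype]
  rw [key, Finset.mul_sum]
  exact Finset.sum_congr rfl fun k _ => (comp_integral hσ Φ k).symm


lemma main_est {σ : ℕ} (hσ : 1 ≤ σ) (h G : (Fin d → ℝ) → ℝ) (hh : Continuous h)
    (hG : Continuous G)
    (hGP : ∀ (x : Fin d → ℝ) (m : Fin d → ℤ), G (x + fun i => (m i : ℝ)) = G x)
    (hG0 : ∀ x, 0 ≤ G x) {L : ℝ} (hL : 0 ≤ L)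
    (hLip : ∀ x ∈ Set.Icc (0 : Fin d → ℝ) 1, ∀ y ∈ Set.Icc (0 : Fin d → ℝ) 1,
      |h x - h y| ≤ L * ‖x - y‖) :
    |(∫ x in Set.Icc (0 : Fin d → ℝ) 1, h x * G ((σ:ℝ) • x))
        - (∫ x in Set.Icc (0 : Fin d → ℝ) 1, h x) * ∫ x in Set.Icc (0 : Fin d → ℝ) 1, G x|
      ≤ L / σ * ∫ x in Set.Icc (0 : Fin d → ℝ) 1, G x := by
  set I := Set.Icc (0 : Fin d → ℝ) 1 with hIdef
  have hσ0 : (0:ℝ) < σ := by exact_mod_cast hσ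
  have hσd : (0:ℝ) < (σ:ℝ)^d := by positivity
  have hIntIco : ∀ F : (Fin d → ℝ) → ℝ, Continuous F → IntegrableOn F (IcoC d) volume :=
    fun F hF => (hF.integrableOn_Icc (a := 0) (b := 1)).mono_set icoC_subset
  have hvol : volume (IcoC d) < ⊤ :=
    lt_of_le_of_lt (measure_mono icoC_subset) isCompact_Icc.measure_lt_top
  have hTcont : ∀ k : Fin d → Fin σ, Continuous (Tmap σ k) :=
    fun k => by unfold Tmap; fun_prop
  have hGσcont : Continuous fun x : Fin d → ℝ => G ((σ:ℝ) • x) :=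
    hG.comp (continuous_id.const_smul ((σ:ℝ)))
  have hΦ : Continuous fun x => h x * G ((σ:ℝ) • x) := hh.mul hGσcont
  have hTz : ∀ (k : Fin d → Fin σ) (z : Fin d → ℝ), G ((σ:ℝ) • Tmap σ k z) = G z := by
    intro k z
    have e : (σ:ℝ) • Tmap σ k z = z + fun i => ((k i : ℕ) : ℝ) :=
      smul_inv_smul₀ (ne_of_gt hσ0) _
    rw [e]
    have := hGP z (fun i => ((k i : ℕ) : ℤ))
    simpa using this
  have step1 : (σ:ℝ)^d * ∫ x in I, h x * G ((σ:ℝ) • x)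
      = ∑ k : Fin d → Fin σ, ∫ z in IcoC d, h (Tmap σ k z) * G z := by
    rw [tiling hσ _ (hΦ.integrableOn_Icc)]
    refine Finset.sum_congr rfl fun k _ => ?_
    simp_rw [hTz]
  have step2 : (σ:ℝ)^d * (∫ x in I, h x)
      = ∑ k : Fin d → Fin σ, ∫ z in IcoC d, h (Tmap σ k z) :=
    tiling hσ h hh.integrableOn_Icc
  have card_eq : (Fintype.card (Fin d → Fin σ) : ℝ) = (σ:ℝ)^d := by
    simp [Fintype.card_fun]
  have hpw : ∀ z ∈ IcoC d,
      |∑ k : Fin d → Fin σ, h (Tmap σ k z) - (σ:ℝ)^d * ∫ x in I, h x|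
        ≤ (σ:ℝ)^d * (L / σ) := by
    intro z hz
    have perk : ∀ k : Fin d → Fin σ,
        |h (Tmap σ k z) - ∫ w in IcoC d, h (Tmap σ k w)| ≤ L / σ := by
      intro k
      have hhk : Continuous fun w => h (Tmap σ k w) := hh.comp (hTcont k)
      have e1 : h (Tmap σ k z) - ∫ w in IcoC d, h (Tmap σ k w)
          = ∫ w in IcoC d, (h (Tmap σ k z) - h (Tmap σ k w)) := by
        rw [integral_sub (integrableOn_const (C := h (Tmap σ k z)) hvol.ne) (hIntIco _ hhk)]
        rw [setIntegral_const, measureReal_def, volume_IcoC, one_smul]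
      have hb : ∀ w ∈ IcoC d, ‖h (Tmap σ k z) - h (Tmap σ k w)‖ ≤ L / σ := by
        intro w hw
        have hzI : z ∈ I := icoC_subset hz
        have hwI : w ∈ I := icoC_subset hw
        have hTz' := Tmap_mem_Icc hσ k hzI
        have hTw' := Tmap_mem_Icc hσ k hwI
        have hnorm : ‖Tmap σ k z - Tmap σ k w‖ ≤ (σ:ℝ)⁻¹ := by
          have e2 : Tmap σ k z - Tmap σ k w = (σ:ℝ)⁻¹ • (z - w) := by
            rw [Tmap, Tmap, ← smul_sub]; congr 1; abel
          rw [e2, norm_smul, Real.norm_eq_abs, abs_of_nonneg (inv_nonneg.2 hσ0.le)]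
          have h1 : ‖z - w‖ ≤ 1 := by
            rw [pi_norm_le_iff_of_nonneg zero_le_one]
            intro i
            rw [Pi.sub_apply, Real.norm_eq_abs, abs_le]
            have hz1 := hzI.1 i
            have hz2 := hzI.2 i
            have hw1 := hwI.1 i
            have hw2 := hwI.2 i
            simp only [Pi.zero_apply, Pi.one_apply] at hz1 hz2 hw1 hw2
            exact ⟨by linarith, by linarith⟩
          calc (σ:ℝ)⁻¹ * ‖z - w‖ ≤ (σ:ℝ)⁻¹ * 1 :=
                mul_le_mul_of_nonneg_left h1 (inv_nonneg.2 hσ0.le)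
            _ = (σ:ℝ)⁻¹ := mul_one _
        rw [Real.norm_eq_abs]
        calc |h (Tmap σ k z) - h (Tmap σ k w)| ≤ L * ‖Tmap σ k z - Tmap σ k w‖ :=
              hLip _ hTz' _ hTw'
          _ ≤ L * (σ:ℝ)⁻¹ := mul_le_mul_of_nonneg_left hnorm hL
          _ = L / σ := (div_eq_mul_inv L σ).symm
      rw [e1]
      calc |∫ w in IcoC d, (h (Tmap σ k z) - h (Tmap σ k w))|
          ≤ (L / σ) * (volume (IcoC d)).toReal := by
            have := MeasureTheory.norm_setIntegral_le_of_norm_le_const hvol hb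
            simpa [Real.norm_eq_abs, measureReal_def] using this
        _ = L / σ := by rw [volume_IcoC, mul_one]
    rw [step2, ← Finset.sum_sub_distrib]
    calc |∑ k : Fin d → Fin σ, (h (Tmap σ k z) - ∫ w in IcoC d, h (Tmap σ k w))|
        ≤ ∑ k : Fin d → Fin σ, |h (Tmap σ k z) - ∫ w in IcoC d, h (Tmap σ k w)| :=
          Finset.abs_sum_le_sum_abs _ _
      _ ≤ ∑ _k : Fin d → Fin σ, (L / σ) := Finset.sum_le_sum fun k _ => perk k
      _ = (σ:ℝ)^d * (L / σ) := by
          rw [Finset.sum_const, Finset.card_univ, nsmul_eq_mul, card_eq]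
  have hSsum : Continuous fun z => ∑ k : Fin d → Fin σ, h (Tmap σ k z) :=
    continuous_finset_sum _ fun k _ => hh.comp (hTcont k)
  have eg : ∫ x in I, G x = ∫ z in IcoC d, G z := (setIntegral_congr_set icoC_ae_eq).symm
  have e3 : (σ:ℝ)^d * ((∫ x in I, h x * G ((σ:ℝ) • x)) - (∫ x in I, h x) * ∫ x in I, G x)
      = ∫ z in IcoC d,
          (∑ k : Fin d → Fin σ, h (Tmap σ k z) - (σ:ℝ)^d * ∫ x in I, h x) * G z := by
    simp_rw [sub_mul]
    rw [integral_sub (hIntIco (fun z => (∑ k : Fin d → Fin σ, h (Tmap σ k z)) * G z) (hSsum.mul hG))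
      (hIntIco (fun z => ((σ:ℝ)^d * ∫ x in I, h x) * G z) (continuous_const.mul hG))]
    rw [mul_sub, step1, eg]
    congr 1
    · calc ∑ k : Fin d → Fin σ, ∫ z in IcoC d, h (Tmap σ k z) * G z
          = ∫ z in IcoC d, ∑ k : Fin d → Fin σ, h (Tmap σ k z) * G z :=
            (MeasureTheory.integral_finset_sum _
              (fun k _ => hIntIco _ ((hh.comp (hTcont k)).mul hG))).symm
        _ = ∫ z in IcoC d, (∑ k : Fin d → Fin σ, h (Tmap σ k z)) * G z := by
            simp_rw [Finset.sum_mul]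
    · rw [MeasureTheory.integral_const_mul, mul_assoc]
  have e4 : |∫ z in IcoC d,
        (∑ k : Fin d → Fin σ, h (Tmap σ k z) - (σ:ℝ)^d * ∫ x in I, h x) * G z|
      ≤ (σ:ℝ)^d * (L / σ) * ∫ z in IcoC d, G z := by
    calc |∫ z in IcoC d,
          (∑ k : Fin d → Fin σ, h (Tmap σ k z) - (σ:ℝ)^d * ∫ x in I, h x) * G z|
        ≤ ∫ z in IcoC d,
            |∑ k : Fin d → Fin σ, h (Tmap σ k z) - (σ:ℝ)^d * ∫ x in I, h x| * |G z| := by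
          simpa [Real.norm_eq_abs] using
            MeasureTheory.norm_integral_le_integral_norm (μ := volume.restrict (IcoC d))
              (fun z => (∑ k : Fin d → Fin σ, h (Tmap σ k z) - (σ:ℝ)^d * ∫ x in I, h x) * G z)
      _ ≤ ∫ z in IcoC d, ((σ:ℝ)^d * (L / σ)) * G z := by
          refine MeasureTheory.setIntegral_mono_on
            (hIntIco _ (((hSsum.sub continuous_const).abs).mul hG.abs))
            (hIntIco _ (continuous_const.mul hG)) measurableSet_IcoC fun z hz => ?_
          rw [abs_of_nonneg (hG0 z)]
          exact mul_le_mul_of_nonneg_right (hpw z hz) (hG0 z)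
      _ = (σ:ℝ)^d * (L / σ) * ∫ z in IcoC d, G z := MeasureTheory.integral_const_mul _ _
  rw [← e3, ← eg] at e4
  rw [abs_mul, abs_of_pos hσd, mul_assoc] at e4
  exact le_of_mul_le_mul_left e4 hσd


lemma biSup_le_aux {F : (Fin d → ℝ) → ℝ} (hF : Continuous F) (hF0 : ∀ x, 0 ≤ F x) :
    (∀ x ∈ Set.Icc (0 : Fin d → ℝ) 1, F x ≤ ⨆ x ∈ Set.Icc (0 : Fin d → ℝ) 1, F x)
    ∧ 0 ≤ ⨆ x ∈ Set.Icc (0 : Fin d → ℝ) 1, F x := by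
  set s := Set.Icc (0 : Fin d → ℝ) 1 with hs
  have hbdd : BddAbove (F '' s) := (isCompact_Icc.image hF).bddAbove
  have hg : BddAbove (Set.range fun x => ⨆ _ : x ∈ s, F x) := by
    obtain ⟨B, hB⟩ := hbdd
    refine ⟨max B 0, ?_⟩
    rintro y ⟨x, rfl⟩
    by_cases hx : x ∈ s
    · simp only [ciSup_pos hx]
      exact le_max_of_le_left (hB ⟨x, hx, rfl⟩)
    · simp [hx, le_max_right B 0]
  have h1 : ∀ x ∈ s, F x ≤ ⨆ x ∈ s, F x := by
    intro x hx
    have := le_ciSup hg x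
    rwa [ciSup_pos hx] at this
  refine ⟨h1, ?_⟩
  have h0s : (0 : Fin d → ℝ) ∈ s := Set.mem_Icc.2 ⟨le_refl _, zero_le_one⟩
  exact le_trans (hF0 0) (h1 0 h0s)

lemma final_aux {p : ℝ} (hp : 1 ≤ p) {σ : ℕ} (hσ : 1 ≤ σ)
    (f g : (Fin d → ℝ) → ℝ) (hf : ContDiff ℝ (⊤ : ℕ∞) f) (hg : ContDiff ℝ (⊤ : ℕ∞) g)
    (hgP : ∀ (x : Fin d → ℝ) (m : Fin d → ℤ), g (x + fun i => (m i : ℝ)) = g x) :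
    |cubeNormLp d p (fun x => f x * g (fun i => (σ : ℝ) * x i))
        - cubeNormLp d p f * cubeNormLp d p g|
      ≤ p * (σ : ℝ) ^ (-(1:ℝ)/p) * cubeNormC1 d f * cubeNormLp d p g := by
  have hp0 : (0:ℝ) < p := lt_of_lt_of_le one_pos hp
  have hσ0 : (0:ℝ) < σ := by exact_mod_cast hσ
  have h1p0 : (0:ℝ) < 1/p := by positivity
  have h1p1 : 1/p ≤ 1 := by rw [div_le_one hp0]; exact hp
  have hfc : Continuous f := hf.continuous
  have hgc : Continuous g := hg.continuous
  have hhc : Continuous fun x => |f x| ^ p := hfc.abs.rpow_const (fun x => Or.inr hp0.le)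
  have hGc : Continuous fun y => |g y| ^ p := hgc.abs.rpow_const (fun x => Or.inr hp0.le)
  have hG0 : ∀ y : Fin d → ℝ, 0 ≤ |g y| ^ p := fun y => Real.rpow_nonneg (abs_nonneg _) _
  have hGP : ∀ (x : Fin d → ℝ) (m : Fin d → ℤ),
      |g (x + fun i => (m i : ℝ))| ^ p = |g x| ^ p := fun x m => by rw [hgP x m]
  obtain ⟨hMle, hM0⟩ := biSup_le_aux (d := d) hfc.abs (fun x => abs_nonneg _)
  obtain ⟨hDle, hD0⟩ := biSup_le_aux (d := d)
    (hf.continuous_fderiv (by simp)).norm (fun x => norm_nonneg _)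
  set M := ⨆ x ∈ Set.Icc (0 : Fin d → ℝ) 1, |f x| with hM_def
  set D := ⨆ x ∈ Set.Icc (0 : Fin d → ℝ) 1, ‖fderiv ℝ f x‖ with hD_def
  have hMD0 : 0 ≤ M + D := add_nonneg hM0 hD0
  have hfLip : ∀ x ∈ Set.Icc (0 : Fin d → ℝ) 1, ∀ y ∈ Set.Icc (0 : Fin d → ℝ) 1,
      |f x - f y| ≤ D * ‖x - y‖ := by
    intro x hx y hy
    have := Convex.norm_image_sub_le_of_norm_fderiv_le
      (fun z _ => (hf.differentiable (by simp)) z) (fun z hz => hDle z hz)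
      (convex_Icc _ _) hy hx
    simpa [Real.norm_eq_abs] using this
  have hLp : (0:ℝ) ≤ p * M ^ (p-1) :=
    mul_nonneg hp0.le (Real.rpow_nonneg hM0 _)
  have hL0 : 0 ≤ p * M ^ (p-1) * D := mul_nonneg hLp hD0
  have hLip : ∀ x ∈ Set.Icc (0 : Fin d → ℝ) 1, ∀ y ∈ Set.Icc (0 : Fin d → ℝ) 1,
      abs (|f x| ^ p - |f y| ^ p) ≤ (p * M ^ (p-1) * D) * ‖x - y‖ := by
    intro x hx y hy
    calc abs (|f x| ^ p - |f y| ^ p) ≤ p * M ^ (p-1) * abs (|f x| - |f y|) :=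
          rpow_lipschitz hp (abs_nonneg _) (abs_nonneg _) (hMle x hx) (hMle y hy)
      _ ≤ p * M ^ (p-1) * |f x - f y| :=
          mul_le_mul_of_nonneg_left (abs_abs_sub_abs_le_abs_sub _ _) hLp
      _ ≤ p * M ^ (p-1) * (D * ‖x - y‖) :=
          mul_le_mul_of_nonneg_left (hfLip x hx y hy) hLp
      _ = (p * M ^ (p-1) * D) * ‖x - y‖ := by ring
  have main := main_est hσ (fun x => |f x| ^ p) (fun y => |g y| ^ p)
    hhc hGc hGP hG0 hL0 hLip
  set A := ∫ x in Set.Icc (0 : Fin d → ℝ) 1, |f x| ^ p * |g ((σ:ℝ) • x)| ^ p with hA_def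
  set ch := ∫ x in Set.Icc (0 : Fin d → ℝ) 1, |f x| ^ p with hch_def
  set cG := ∫ x in Set.Icc (0 : Fin d → ℝ) 1, |g x| ^ p with hcG_def
  have hch0 : 0 ≤ ch := setIntegral_nonneg measurableSet_Icc
    fun x _ => Real.rpow_nonneg (abs_nonneg _) _
  have hcG0 : 0 ≤ cG := setIntegral_nonneg measurableSet_Icc fun x _ => hG0 x
  have hA0 : 0 ≤ A := setIntegral_nonneg measurableSet_Icc
    fun x _ => mul_nonneg (Real.rpow_nonneg (abs_nonneg _) _) (hG0 _)
  have hNprod : cubeNormLp d p (fun x => f x * g (fun i => (σ : ℝ) * x i)) = A ^ (1/p) := by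
    unfold cubeNormLp
    rw [hA_def]
    congr 1
    refine MeasureTheory.setIntegral_congr_fun measurableSet_Icc fun x _ => ?_
    have e : (fun i => (σ:ℝ) * x i) = (σ:ℝ) • x := by funext i; simp
    show |f x * g (fun i => (σ:ℝ) * x i)| ^ p = |f x| ^ p * |g ((σ:ℝ) • x)| ^ p
    rw [e, abs_mul, Real.mul_rpow (abs_nonneg _) (abs_nonneg _)]
  have hNf : cubeNormLp d p f = ch ^ (1/p) := rfl
  have hNg : cubeNormLp d p g = cG ^ (1/p) := rfl
  have hC1 : cubeNormC1 d f = M + D := rfl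
  rw [hNprod, hNf, hNg, hC1]
  have e1 : ch ^ (1/p) * cG ^ (1/p) = (ch * cG) ^ (1/p) := (Real.mul_rpow hch0 hcG0).symm
  rw [e1]
  have hσexp0 : (0:ℝ) ≤ (σ:ℝ) ^ (-(1:ℝ)/p) := Real.rpow_nonneg hσ0.le _
  have l1 : ((p * M ^ (p-1) * D) / σ) ^ (1/p)
      = (p * M ^ (p-1) * D) ^ (1/p) * (σ:ℝ) ^ (-(1:ℝ)/p) := by
    rw [div_eq_mul_inv, Real.mul_rpow hL0 (inv_nonneg.2 hσ0.le),
      Real.inv_rpow hσ0.le, ← Real.rpow_neg hσ0.le, neg_div]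
  have hpow : (M + D) ^ (p - 1) * (M + D) = (M + D) ^ p := by
    rcases eq_or_lt_of_le hMD0 with h0 | hpos
    · rw [← h0, Real.zero_rpow (ne_of_gt hp0), mul_zero]
    · rw [show (M + D) ^ p = (M + D) ^ ((p-1) + 1) from by rw [sub_add_cancel],
        Real.rpow_add hpos, Real.rpow_one]
  have l2 : (p * M ^ (p-1) * D) ^ (1/p) ≤ p * (M + D) := by
    have hL_le : p * M ^ (p-1) * D ≤ p * (M + D) ^ p := by
      calc p * M ^ (p-1) * D ≤ p * (M + D) ^ (p-1) * (M + D) := by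
            refine mul_le_mul ?_ (le_add_of_nonneg_left hM0) hD0 ?_
            · exact mul_le_mul_of_nonneg_left
                (Real.rpow_le_rpow hM0 (le_add_of_nonneg_right hD0) (by linarith)) hp0.le
            · exact mul_nonneg hp0.le (Real.rpow_nonneg hMD0 _)
        _ = p * (M + D) ^ p := by rw [mul_assoc, hpow]
    calc (p * M ^ (p-1) * D) ^ (1/p) ≤ (p * (M + D) ^ p) ^ (1/p) :=
          Real.rpow_le_rpow hL0 hL_le h1p0.le
      _ = p ^ (1/p) * ((M + D) ^ p) ^ (1/p) :=
          Real.mul_rpow hp0.le (Real.rpow_nonneg hMD0 _)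
      _ = p ^ (1/p) * (M + D) := by
          rw [← Real.rpow_mul hMD0, mul_one_div, div_self (ne_of_gt hp0), Real.rpow_one]
      _ ≤ p * (M + D) := by
          refine mul_le_mul_of_nonneg_right ?_ hMD0
          calc p ^ (1/p) ≤ p ^ (1:ℝ) := Real.rpow_le_rpow_of_exponent_le hp h1p1
            _ = p := Real.rpow_one p
  calc |A ^ (1/p) - (ch * cG) ^ (1/p)| ≤ |A - ch * cG| ^ (1/p) :=
        abs_rpow_sub_rpow_le h1p0 h1p1 hA0 (mul_nonneg hch0 hcG0)
    _ ≤ ((p * M ^ (p-1) * D) / σ * cG) ^ (1/p) := by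
        refine Real.rpow_le_rpow (abs_nonneg _) main h1p0.le
    _ = ((p * M ^ (p-1) * D) / σ) ^ (1/p) * cG ^ (1/p) :=
        Real.mul_rpow (div_nonneg hL0 hσ0.le) hcG0
    _ = (p * M ^ (p-1) * D) ^ (1/p) * (σ:ℝ) ^ (-(1:ℝ)/p) * cG ^ (1/p) := by rw [l1]
    _ ≤ (p * (M + D)) * (σ:ℝ) ^ (-(1:ℝ)/p) * cG ^ (1/p) := by
        refine mul_le_mul_of_nonneg_right
          (mul_le_mul_of_nonneg_right l2 hσexp0) (Real.rpow_nonneg hcG0 _)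
    _ = p * (σ:ℝ) ^ (-(1:ℝ)/p) * (M + D) * cG ^ (1/p) := by ring

end Stmt14

/-- `L^p` decorrelation lemma (Lemma 6.2): for smooth `ℤ^d`-periodic `f, g` and
`σ ∈ ℕ`, `| ‖f·g(σ·)‖_{L^p} − ‖f‖_{L^p}‖g‖_{L^p} | ≤ C(p,d) σ^{−1/p} ‖f‖_{C¹} ‖g‖_{L^p}`. -/
theorem stmt_14 (d : ℕ) (hd : 1 ≤ d) (p : ℝ) (hp : 1 ≤ p) :
    ∃ C > 0, ∀ σ : ℕ, 1 ≤ σ →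
      ∀ f g : (Fin d → ℝ) → ℝ, ContDiff ℝ (⊤ : ℕ∞) f → ContDiff ℝ (⊤ : ℕ∞) g →
      (∀ (x : Fin d → ℝ) (m : Fin d → ℤ), f (x + fun i => (m i : ℝ)) = f x) →
      (∀ (x : Fin d → ℝ) (m : Fin d → ℤ), g (x + fun i => (m i : ℝ)) = g x) →
      |cubeNormLp d p (fun x => f x * g (fun i => (σ : ℝ) * x i))
          - cubeNormLp d p f * cubeNormLp d p g|
        ≤ C * (σ : ℝ) ^ (-(1:ℝ)/p) * cubeNormC1 d f * cubeNormLp d p g := by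
  refine ⟨p, lt_of_lt_of_le one_pos hp, ?_⟩
  intro σ hσ f g hf hg _hfP hgP
  exact Stmt14.final_aux hp hσ f g hf hg hgP
end
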